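/- arXiv:2512.00897 — 2 statements merged into one kernel-verified Lean document; each statement's English description precedes it below -/
import Mathlib

section
/- For every n0, n1 ≥ 0, the partial derivative of V_S with respect to its second (current-data) argument strictly exceeds its partial derivative with respect to its first (historical-data) argument: ∂V_S/∂n1 (n0,n1) > ∂V_S/∂n0 (n0,n1). -/
/-- The denominator `D(n0,n1) = σ²(n0+n1+2 n0 n1) + (1+n0)(1+n1)`. -/
noncomputable def Dden (σ n0 n1 : ℝ) : ℝ :=
  σ^2 * (n0 + n1 + 2*n0*n1) + (1+n0)*(1+n1)

/-- Forecaster value `V_L`. -/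
noncomputable def VL (σ n0 n1 : ℝ) : ℝ :=
  σ^4 * (n0 + n1 + 2*n0*n1) / Dden σ n0 n1

/-- Nowcaster value `V_S`. -/
noncomputable def VS (σ n0 n1 : ℝ) : ℝ :=
  VL σ n0 n1 + (3*σ^2*n0*n1 + 2*σ^2*n1 + n1 + n0*n1) / Dden σ n0 n1

/-!
In each variable `V_S = N / D` is a quotient of affine functions, so both partial derivatives
have denominator `D²`. The difference of their numerators factors as
`(2σ² + 1) (D + (n0 - n1) ∂D/∂n1)`, and since `D` is affine in `n1` the second factor is
`D(n0, n0) > 0`.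
-/

noncomputable def VSnum (σ n0 n1 : ℝ) : ℝ :=
  σ^4 * (n0 + n1 + 2*n0*n1) + 3*σ^2*n0*n1 + 2*σ^2*n1 + n1 + n0*n1

lemma VS_eq_div (σ n0 n1 : ℝ) : VS σ n0 n1 = VSnum σ n0 n1 / Dden σ n0 n1 := by
  rw [VS, VL, ← add_div, VSnum]
  ring

lemma Dden_pos (σ : ℝ) {n0 n1 : ℝ} (h0 : 0 ≤ n0) (h1 : 0 ≤ n1) : 0 < Dden σ n0 n1 := by
  unfold Dden
  positivity

lemma hasDerivAt_VS_fst (σ : ℝ) {n0 n1 : ℝ} (hD : Dden σ n0 n1 ≠ 0) :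
    HasDerivAt (fun x => VS σ x n1)
      (((σ^4 * (1 + 2*n1) + 3*σ^2*n1 + n1) * Dden σ n0 n1
        - VSnum σ n0 n1 * (σ^2 * (1 + 2*n1) + 1 + n1)) / Dden σ n0 n1 ^ 2) n0 := by
  have hN : HasDerivAt (fun x => VSnum σ x n1) (σ^4 * (1 + 2*n1) + 3*σ^2*n1 + n1) n0 := by
    refine ((hasDerivAt_mul_const _).add_const (σ^4 * n1 + 2*σ^2*n1 + n1)).congr_of_eventuallyEq
      (.of_forall fun x => ?_)
    unfold VSnum; ring
  have hDx : HasDerivAt (fun x => Dden σ x n1) (σ^2 * (1 + 2*n1) + 1 + n1) n0 := by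
    refine ((hasDerivAt_mul_const _).add_const (σ^2 * n1 + 1 + n1)).congr_of_eventuallyEq
      (.of_forall fun x => ?_)
    unfold Dden; ring
  simpa only [VS_eq_div] using hN.fun_div hDx hD

lemma hasDerivAt_VS_snd (σ : ℝ) {n0 n1 : ℝ} (hD : Dden σ n0 n1 ≠ 0) :
    HasDerivAt (fun y => VS σ n0 y)
      (((σ^4 * (1 + 2*n0) + 3*σ^2*n0 + 2*σ^2 + 1 + n0) * Dden σ n0 n1
        - VSnum σ n0 n1 * (σ^2 * (1 + 2*n0) + 1 + n0)) / Dden σ n0 n1 ^ 2) n1 := by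
  have hN : HasDerivAt (fun y => VSnum σ n0 y)
      (σ^4 * (1 + 2*n0) + 3*σ^2*n0 + 2*σ^2 + 1 + n0) n1 := by
    refine ((hasDerivAt_mul_const _).add_const (σ^4 * n0)).congr_of_eventuallyEq
      (.of_forall fun y => ?_)
    unfold VSnum; ring
  have hDy : HasDerivAt (fun y => Dden σ n0 y) (σ^2 * (1 + 2*n0) + 1 + n0) n1 := by
    refine ((hasDerivAt_mul_const _).add_const (σ^2 * n0 + 1 + n0)).congr_of_eventuallyEq
      (.of_forall fun y => ?_)
    unfold Dden; ring
  simpa only [VS_eq_div] using hN.fun_div hDy hD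

lemma deriv_VS_snd_sub_deriv_VS_fst (σ : ℝ) {n0 n1 : ℝ} (hD : Dden σ n0 n1 ≠ 0) :
    deriv (fun y => VS σ n0 y) n1 - deriv (fun x => VS σ x n1) n0
      = (2*σ^2 + 1) * Dden σ n0 n0 / Dden σ n0 n1 ^ 2 := by
  rw [(hasDerivAt_VS_snd σ hD).deriv, (hasDerivAt_VS_fst σ hD).deriv, ← sub_div]
  congr 1
  unfold VSnum Dden
  ring

theorem stmt6_general (σ : ℝ) (n0 n1 : ℝ) (h0 : 0 ≤ n0) (h1 : 0 ≤ n1) :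
    deriv (fun x => VS σ x n1) n0 < deriv (fun y => VS σ n0 y) n1 := by
  have hD : 0 < Dden σ n0 n1 := Dden_pos σ h0 h1
  rw [← sub_pos, deriv_VS_snd_sub_deriv_VS_fst σ hD.ne']
  exact div_pos (mul_pos (by positivity) (Dden_pos σ h0 h0)) (pow_pos hD 2)

/-- `∂V_S/∂n1 (n0,n1) > ∂V_S/∂n0 (n0,n1)` for all `n0, n1 ≥ 0`. -/
theorem stmt6 (σ : ℝ) (hσ : 0 < σ) (n0 n1 : ℝ) (h0 : 0 ≤ n0) (h1 : 0 ≤ n1) :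
    deriv (fun x => VS σ x n1) n0 < deriv (fun y => VS σ n0 y) n1 :=
  stmt6_general σ n0 n1 h0 h1
end

section
/- Second-best composition distortion (discrimination case): let λ ∈ (0,1) and c > 0. Define the first-best objective F(n0,n1) = λ·V_S(n0,n1) + (1−λ)·V_L(n0,n1) − c·(n0+n1) and the second-best (discrimination) objective G(n0,n1) = λ·V_S(n0,n1) + (1−λ)·V_L(n0,0) − c·(n0+n1), both on [0,∞)×[0,∞). Suppose (n0*, n1*) maximizes F over [0,∞)×[0,∞) with n0* > 0 and n1* > 0, and (n0', n1') maximizes G over [0,∞)×[0,∞) with n0' > 0 and n1' > 0. Then n0' > n0* and n1' < n1*. -/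
/-!
At an interior maximum both partial derivatives vanish; all partials of `V_L`, `V_S` have
the form `(…)/D²`, and `∂V_S/∂n1 = A(n0)/D²` with `A = numDerivVS σ` increasing. Combining
the two first-best conditions gives `λ(A(n0*) - σ⁴) < (1-λ)σ⁴(1+n1*)²`, combining the two
second-best ones gives `λ(A(n0') - σ⁴) > (1-λ)σ⁴(1+n1')²`. If `n0' ≤ n0*` these force
`n1' < n1*`, so every denominator at the second best is smaller and the `n0`-conditions
`λσ⁴/D² + … = c` cannot both hold. Once `n0' > n0*`, the marginal value `λ A(n0)/D(n0,n1)²`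
of current data is strictly decreasing in `n0` and decreasing in `n1`; it is `< c` at the
first best, so `n1' ≥ n1*` would contradict the second-best `n1`-condition.
-/

noncomputable def numDerivVS (σ x : ℝ) : ℝ :=
  σ^4*(1+x)^2 + ((1+x)+σ^2*(2+3*x))*(σ^2*x+1+x)

noncomputable def firstBestObjective (σ lam c m0 m1 : ℝ) : ℝ :=
  lam * VS σ m0 m1 + (1-lam) * VL σ m0 m1 - c*(m0+m1)

noncomputable def secondBestObjective (σ lam c m0 m1 : ℝ) : ℝ :=
  lam * VS σ m0 m1 + (1-lam) * VL σ m0 0 - c*(m0+m1)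

section Dden

variable {σ x x' y y' : ℝ}

lemma Dden_pos_s16 (hx : 0 ≤ x) (hy : 0 ≤ y) : 0 < Dden σ x y := by
  unfold Dden; positivity

lemma Dden_le_Dden (hx : 0 ≤ x) (hy : 0 ≤ y) (hxx' : x ≤ x') (hyy' : y ≤ y') :
    Dden σ x y ≤ Dden σ x' y' := by
  unfold Dden
  nlinarith [mul_nonneg (sq_nonneg σ) (mul_nonneg (sub_nonneg.2 hxx') (sub_nonneg.2 hyy')),
    mul_nonneg (sub_nonneg.2 hxx') (sub_nonneg.2 hyy'), mul_nonneg (sq_nonneg σ) hx,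
    mul_nonneg (sq_nonneg σ) hy]

lemma Dden_lt_Dden_right (hx : 0 ≤ x) (hyy' : y < y') : Dden σ x y < Dden σ x y' := by
  have : Dden σ x y' - Dden σ x y = (y' - y) * (σ^2*(1+2*x) + (1+x)) := by unfold Dden; ring
  have : 0 < (y' - y) * (σ^2*(1+2*x) + (1+x)) := mul_pos (sub_pos.2 hyy') (by positivity)
  linarith

lemma one_add_mul_Dden_zero_lt (hσ : σ ≠ 0) (hx : 0 ≤ x) (hy : 0 < y) :
    (1 + y) * Dden σ x 0 < Dden σ x y := by
  have : Dden σ x y - (1 + y) * Dden σ x 0 = σ^2 * y * (1 + x) := by unfold Dden; ring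
  have : 0 < σ^2 * y * (1 + x) := by positivity
  linarith

end Dden

lemma numDerivVS_mono {σ x x' : ℝ} (hx : 0 ≤ x) (hxx' : x ≤ x') :
    numDerivVS σ x ≤ numDerivVS σ x' := by
  unfold numDerivVS
  have hx' : 0 ≤ x' := hx.trans hxx'
  gcongr

-- `∂VS/∂n1 = numDerivVS σ n0 / D²` is strictly decreasing in `n0`.
lemma numDerivVS_mul_Dden_sq_lt {σ x x' y : ℝ} (hσ : σ ≠ 0) (hx : 0 ≤ x) (hy : 0 ≤ y)
    (hxx' : x < x') :
    numDerivVS σ x' * Dden σ x y ^ 2 < numDerivVS σ x * Dden σ x' y ^ 2 := by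
  have hx' : 0 ≤ x' := hx.trans hxx'.le
  have key : numDerivVS σ x * Dden σ x' y ^ 2 - numDerivVS σ x' * Dden σ x y ^ 2
      = (x' - x) * σ^4 * (2*(1+y)*(1+x)*(1+x')
          + σ^2*(2*(1+2*y)*(1+x)*(1+x') + 2*(1+y)*(x+x'+2*x*x'))
          + σ^4*(2*y + (1+4*y)*(x+x') + 4*(1+2*y)*x*x')) := by
    unfold numDerivVS Dden; ring
  rw [← sub_pos, key]
  have := sub_pos.2 hxx'
  positivity

lemma hasDerivAt_of_eq_affine_div {f : ℝ → ℝ} {x : ℝ} (p q r w : ℝ)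
    (hf : ∀ z, f z = (p*z + q) / (r*z + w)) (h : r*x + w ≠ 0) :
    HasDerivAt f ((p*w - q*r) / (r*x + w)^2) x := by
  have hnum : HasDerivAt (fun z => p*z + q) p x := by
    simpa using ((hasDerivAt_id x).const_mul p).add_const q
  have hden : HasDerivAt (fun z => r*z + w) r x := by
    simpa using ((hasDerivAt_id x).const_mul r).add_const w
  rw [funext hf]
  exact (hnum.fun_div hden h).congr_deriv (by ring)

section Derivatives

variable {σ x y : ℝ}

lemma hasDerivAt_VL_right (h : Dden σ x y ≠ 0) :
    HasDerivAt (fun z => VL σ x z) (σ^4*(1+x)^2 / Dden σ x y ^ 2) y := by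
  have hD : Dden σ x y = (σ^2*(1+2*x) + (1+x))*y + (σ^2*x + (1+x)) := by unfold Dden; ring
  convert hasDerivAt_of_eq_affine_div (f := fun z => VL σ x z) (σ^4*(1+2*x)) (σ^4*x) _ _
    (fun z => by unfold VL Dden; ring) (hD ▸ h) using 1
  rw [hD]; ring

lemma hasDerivAt_VL_left (h : Dden σ x y ≠ 0) :
    HasDerivAt (fun z => VL σ z y) (σ^4*(1+y)^2 / Dden σ x y ^ 2) x := by
  have hD : Dden σ x y = (σ^2*(1+2*y) + (1+y))*x + (σ^2*y + (1+y)) := by unfold Dden; ring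
  convert hasDerivAt_of_eq_affine_div (f := fun z => VL σ z y) (σ^4*(1+2*y)) (σ^4*y) _ _
    (fun z => by unfold VL Dden; ring) (hD ▸ h) using 1
  rw [hD]; ring

lemma hasDerivAt_VS_right (h : Dden σ x y ≠ 0) :
    HasDerivAt (fun z => VS σ x z) (numDerivVS σ x / Dden σ x y ^ 2) y := by
  have hD : Dden σ x y = (σ^2*(1+2*x) + (1+x))*y + (σ^2*x + (1+x)) := by unfold Dden; ring
  convert hasDerivAt_of_eq_affine_div (f := fun z => VS σ x z)
    (σ^4*(1+2*x) + (3*σ^2*x + 2*σ^2 + 1 + x)) (σ^4*x) _ _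
    (fun z => by unfold VS VL Dden; rw [← add_div]; ring) (hD ▸ h) using 1
  rw [hD]; unfold numDerivVS; ring

lemma hasDerivAt_VS_left (h : Dden σ x y ≠ 0) :
    HasDerivAt (fun z => VS σ z y) (σ^4 / Dden σ x y ^ 2) x := by
  have hD : Dden σ x y = (σ^2*(1+2*y) + (1+y))*x + (σ^2*y + (1+y)) := by unfold Dden; ring
  convert hasDerivAt_of_eq_affine_div (f := fun z => VS σ z y)
    (σ^4*(1+2*y) + (3*σ^2*y + y)) (σ^4*y + (2*σ^2*y + y)) _ _
    (fun z => by unfold VS VL Dden; rw [← add_div]; ring) (hD ▸ h) using 1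
  rw [hD]; ring

end Derivatives

lemma HasDerivAt.eq_zero_of_forall_nonneg_le {f : ℝ → ℝ} {f' x : ℝ} (hf : HasDerivAt f f' x)
    (hx : 0 < x) (hmax : ∀ z, 0 ≤ z → f z ≤ f x) : f' = 0 :=
  (IsMaxOn.isLocalMax (isMaxOn_iff.2 hmax) (Ici_mem_nhds hx)).hasDerivAt_eq_zero hf

-- `∂F/∂n0 = 0` and `∂F/∂n1 = 0`, multiplied by `D²`
def FirstBestFOC (σ lam c n0 n1 : ℝ) : Prop :=
  lam*σ^4 + (1-lam)*σ^4*(1+n1)^2 = c * Dden σ n0 n1 ^ 2 ∧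
    lam*numDerivVS σ n0 + (1-lam)*σ^4*(1+n0)^2 = c * Dden σ n0 n1 ^ 2

-- `∂G/∂n0 = 0` multiplied by `D(n0,n1)² D(n0,0)²`, and `∂G/∂n1 = 0` multiplied by `D²`
def SecondBestFOC (σ lam c n0 n1 : ℝ) : Prop :=
  lam*σ^4*Dden σ n0 0 ^ 2 + (1-lam)*σ^4*Dden σ n0 n1 ^ 2 =
      c * (Dden σ n0 n1 ^ 2 * Dden σ n0 0 ^ 2) ∧
    lam*numDerivVS σ n0 = c * Dden σ n0 n1 ^ 2

section Optimality

variable {σ lam c n0 n1 : ℝ}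

lemma hasDerivAt_cost_left (c n0 n1 : ℝ) : HasDerivAt (fun z => c*(z+n1)) c n0 := by
  simpa using ((hasDerivAt_id n0).add_const n1).const_mul c

lemma hasDerivAt_cost_right (c n0 n1 : ℝ) : HasDerivAt (fun z => c*(n0+z)) c n1 := by
  simpa using ((hasDerivAt_id n1).const_add n0).const_mul c

lemma firstBestFOC_of_le (h0 : 0 < n0) (h1 : 0 < n1)
    (hmax : ∀ m0 m1, 0 ≤ m0 → 0 ≤ m1 →
      firstBestObjective σ lam c m0 m1 ≤ firstBestObjective σ lam c n0 n1) :
    FirstBestFOC σ lam c n0 n1 := by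
  have hD := (Dden_pos_s16 (σ := σ) h0.le h1.le).ne'
  have foc0 := ((((hasDerivAt_VS_left hD).const_mul lam).add
    ((hasDerivAt_VL_left hD).const_mul (1-lam))).sub (hasDerivAt_cost_left c n0 n1)
    ).eq_zero_of_forall_nonneg_le h0 (fun z hz => hmax z n1 hz h1.le)
  have foc1 := ((((hasDerivAt_VS_right hD).const_mul lam).add
    ((hasDerivAt_VL_right hD).const_mul (1-lam))).sub (hasDerivAt_cost_right c n0 n1)
    ).eq_zero_of_forall_nonneg_le h1 (fun z hz => hmax n0 z h0.le hz)
  field_simp at foc0 foc1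
  constructor <;> linarith

lemma secondBestFOC_of_le (h0 : 0 < n0) (h1 : 0 < n1)
    (hmax : ∀ m0 m1, 0 ≤ m0 → 0 ≤ m1 →
      secondBestObjective σ lam c m0 m1 ≤ secondBestObjective σ lam c n0 n1) :
    SecondBestFOC σ lam c n0 n1 := by
  have hD := (Dden_pos_s16 (σ := σ) h0.le h1.le).ne'
  have hD0 := (Dden_pos_s16 (σ := σ) h0.le le_rfl).ne'
  have foc0 := ((((hasDerivAt_VS_left hD).const_mul lam).add
    ((hasDerivAt_VL_left hD0).const_mul (1-lam))).sub (hasDerivAt_cost_left c n0 n1)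
    ).eq_zero_of_forall_nonneg_le h0 (fun z hz => hmax z n1 hz h1.le)
  have foc1 := ((((hasDerivAt_VS_right hD).const_mul lam).add_const ((1-lam) * VL σ n0 0)).sub
    (hasDerivAt_cost_right c n0 n1)).eq_zero_of_forall_nonneg_le h1 (fun z hz => hmax n0 z h0.le hz)
  field_simp at foc0 foc1
  constructor <;> linarith

end Optimality

section Comparison

variable {σ lam c n0 n1 n0s n1s n0p n1p : ℝ}

lemma FirstBestFOC.gap (h : FirstBestFOC σ lam c n0 n1) (hσ : σ ≠ 0) (hl1 : lam < 1)
    (h0 : 0 ≤ n0) : lam*(numDerivVS σ n0 - σ^4) < (1-lam)*σ^4*(1+n1)^2 := by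
  have hl1' := sub_pos.2 hl1
  have : 0 < (1-lam)*σ^4*(1+n0)^2 := by positivity
  linarith [h.1, h.2]

lemma SecondBestFOC.gap (h : SecondBestFOC σ lam c n0 n1) (hσ : σ ≠ 0) (hl1 : lam < 1)
    (h0 : 0 ≤ n0) (h1 : 0 < n1) : (1-lam)*σ^4*(1+n1)^2 < lam*(numDerivVS σ n0 - σ^4) := by
  have hl1' := sub_pos.2 hl1
  have hD0 : 0 < Dden σ n0 0 := Dden_pos_s16 h0 le_rfl
  have hq := one_add_mul_Dden_zero_lt hσ h0 h1
  have key : lam*(numDerivVS σ n0 - σ^4) * Dden σ n0 0 ^ 2 = (1-lam)*σ^4*Dden σ n0 n1 ^ 2 := by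
    linear_combination Dden σ n0 0 ^ 2 * h.2 - h.1
  refine lt_of_mul_lt_mul_right ?_ (sq_nonneg (Dden σ n0 0))
  calc (1-lam)*σ^4*(1+n1)^2 * Dden σ n0 0 ^ 2 = (1-lam)*σ^4*((1+n1) * Dden σ n0 0) ^ 2 := by
        ring
    _ < (1-lam)*σ^4*Dden σ n0 n1 ^ 2 := by gcongr
    _ = _ := key.symm

lemma FirstBestFOC.left_lt_of_secondBestFOC (hF : FirstBestFOC σ lam c n0s n1s)
    (hG : SecondBestFOC σ lam c n0p n1p)
    (hσ : σ ≠ 0) (hl0 : 0 < lam) (hl1 : lam < 1) (hs0 : 0 ≤ n0s) (hs1 : 0 ≤ n1s)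
    (hp0 : 0 ≤ n0p) (hp1 : 0 < n1p) : n0s < n0p := by
  by_contra! hle
  have hl1' := sub_pos.2 hl1
  have hn1 : n1p < n1s := by
    have := (hG.gap hσ hl1 hp0 hp1).trans_le
      (mul_le_mul_of_nonneg_left (sub_le_sub_right (numDerivVS_mono hp0 hle) _) hl0.le)
      |>.trans (hF.gap hσ hl1 hs0)
    have := lt_of_pow_lt_pow_left₀ 2 (by positivity) (lt_of_mul_lt_mul_left this (by positivity))
    linarith
  set Da := Dden σ n0s n1s
  set Db := Dden σ n0p n1p
  set Db0 := Dden σ n0p 0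
  have hDb0 : 0 < Db0 := Dden_pos_s16 hp0 le_rfl
  have hDb : 0 < Db := Dden_pos_s16 hp0 hp1.le
  have hDa : Dden σ n0p n1s ≤ Da := Dden_le_Dden hp0 hs1 hle le_rfl
  have hDbDa : Db < Da := (Dden_lt_Dden_right hp0 hn1).trans_le hDa
  have hDb0Da : (1+n1s)*Db0 < Da := (one_add_mul_Dden_zero_lt hσ hp0 (hp1.trans hn1)).trans_le hDa
  have : c * Da^2 * (Db^2*Db0^2) < c * Da^2 * (Db^2*Db0^2) := calc
    _ = lam*σ^4*Db0^2*Db^2 + (1-lam)*σ^4*Db^2*((1+n1s)*Db0)^2 := by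
      linear_combination (-(Db^2*Db0^2)) * hF.1
    _ < lam*σ^4*Db0^2*Da^2 + (1-lam)*σ^4*Db^2*Da^2 := by gcongr
    _ = _ := by linear_combination Da^2 * hG.1
  exact lt_irrefl _ this

lemma FirstBestFOC.right_gt_of_secondBestFOC (hF : FirstBestFOC σ lam c n0s n1s)
    (hG : SecondBestFOC σ lam c n0p n1p) (hσ : σ ≠ 0) (hl0 : 0 < lam) (hl1 : lam < 1)
    (hc : 0 ≤ c) (hs0 : 0 ≤ n0s) (hs1 : 0 ≤ n1s) (hn0 : n0s < n0p) : n1p < n1s := by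
  by_contra! hle
  have hl1' := sub_pos.2 hl1
  set Da := Dden σ n0s n1s
  set Dba := Dden σ n0p n1s
  have hDba : 0 < Dba := Dden_pos_s16 (hs0.trans hn0.le) hs1
  have hA : lam*numDerivVS σ n0s < c*Da^2 := by
    have : 0 < (1-lam)*σ^4*(1+n0s)^2 := by positivity
    linarith [hF.2]
  have : c*Dba^2*Da^2 < c*Dba^2*Da^2 := calc
    _ ≤ c*Dden σ n0p n1p ^ 2*Da^2 := by
      gcongr; exact Dden_le_Dden (hs0.trans hn0.le) hs1 le_rfl hle
    _ = lam*(numDerivVS σ n0p*Da^2) := by rw [← hG.2]; ring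
    _ < lam*(numDerivVS σ n0s*Dba^2) :=
      mul_lt_mul_of_pos_left (numDerivVS_mul_Dden_sq_lt hσ hs0 hs1 hn0) hl0
    _ < c*Da^2*Dba^2 := by rw [← mul_assoc]; gcongr
    _ = _ := by ring
  exact lt_irrefl _ this

end Comparison

/-- Second-best composition distortion (discrimination case): relative to the
first best, the second-best database has more historical and less current data. -/
theorem stmt16 (σ lam c : ℝ) (hσ : 0 < σ) (hl0 : 0 < lam) (hl1 : lam < 1) (hc : 0 < c)
    (n0s n1s n0p n1p : ℝ)
    (hs0 : 0 < n0s) (hs1 : 0 < n1s) (hp0 : 0 < n0p) (hp1 : 0 < n1p)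
    (hF : ∀ m0 m1 : ℝ, 0 ≤ m0 → 0 ≤ m1 →
      lam * VS σ m0 m1 + (1-lam) * VL σ m0 m1 - c*(m0+m1) ≤
      lam * VS σ n0s n1s + (1-lam) * VL σ n0s n1s - c*(n0s+n1s))
    (hG : ∀ m0 m1 : ℝ, 0 ≤ m0 → 0 ≤ m1 →
      lam * VS σ m0 m1 + (1-lam) * VL σ m0 0 - c*(m0+m1) ≤
      lam * VS σ n0p n1p + (1-lam) * VL σ n0p 0 - c*(n0p+n1p)) :
    n0s < n0p ∧ n1p < n1s := by
  have hFOC : FirstBestFOC σ lam c n0s n1s := firstBestFOC_of_le hs0 hs1 hF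
  have hSOC : SecondBestFOC σ lam c n0p n1p := secondBestFOC_of_le hp0 hp1 hG
  have hn0 : n0s < n0p :=
    hFOC.left_lt_of_secondBestFOC hSOC hσ.ne' hl0 hl1 hs0.le hs1.le hp0.le hp1
  exact ⟨hn0, hFOC.right_gt_of_secondBestFOC hSOC hσ.ne' hl0 hl1 hc.le hs0.le hs1.le hn0⟩
end
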